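/- Let X be a Banach space and let (f_n) be a sequence of representative functions on X × X* that epi-converges to a representative function f. Then liminf L(f_n) ⊂ L(f): if (x_n, x_n*) ∈ L(f_n) for all n and (x_n, x_n*) → (x, x*) strongly, then f(x, x*) = ⟨x, x*⟩, i.e. (x, x*) ∈ L(f). -/

import Mathlib

open Filter Topology
noncomputable section
variable {X : Type*} [NormedAddCommGroup X] [NormedSpace ℝ X]

def pairing (p : X × StrongDual ℝ X) : ℝ := p.2 p.1

def ConvexERealOn {E : Type*} [AddCommGroup E] [Module ℝ E] (f : E → EReal) : Prop :=
  ∀ x y : E, ∀ a b : ℝ, 0 ≤ a → 0 ≤ b → a + b = 1 →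
    f (a • x + b • y) ≤ (a : EReal) * f x + (b : EReal) * f y

def IsGamma {E : Type*} [AddCommGroup E] [Module ℝ E] [TopologicalSpace E] (f : E → EReal) : Prop :=
  LowerSemicontinuous f ∧ ConvexERealOn f ∧ ∀ x, f x ≠ ⊥

def EpiConverges {E : Type*} [TopologicalSpace E] (fs : ℕ → E → EReal) (f : E → EReal) : Prop :=
  ∀ z : E,
    (∃ zs : ℕ → E, Tendsto zs atTop (nhds z) ∧
      Tendsto (fun n => fs n (zs n)) atTop (nhds (f z))) ∧
    (∀ zs : ℕ → E, Tendsto zs atTop (nhds z) →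
      f z ≤ Filter.liminf (fun n => fs n (zs n)) atTop)

def conjFn (f : X × StrongDual ℝ X → EReal) (q : StrongDual ℝ X × X) : EReal :=
  ⨆ p : X × StrongDual ℝ X, (((q.1 p.1 + p.2 q.2 : ℝ) : EReal) - f p)

def Lset (f : X × StrongDual ℝ X → EReal) : Set (X × StrongDual ℝ X) :=
  {p | f p = (pairing p : EReal)}

def MonotoneSet (T : Set (X × StrongDual ℝ X)) : Prop :=
  ∀ p ∈ T, ∀ q ∈ T, 0 ≤ (q.2 - p.2) (q.1 - p.1)

def MaximalMonotone (T : Set (X × StrongDual ℝ X)) : Prop :=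
  MonotoneSet T ∧ ∀ S : Set (X × StrongDual ℝ X), MonotoneSet S → T ⊆ S → S = T

def OpLiminf (Ts : ℕ → Set (X × StrongDual ℝ X)) : Set (X × StrongDual ℝ X) :=
  {p | ∃ zs : ℕ → X × StrongDual ℝ X, (∀ n, zs n ∈ Ts n) ∧ Tendsto zs atTop (nhds p)}

def fitz (T : Set (X × StrongDual ℝ X)) (p : X × StrongDual ℝ X) : EReal :=
  ⨆ q ∈ T, (((p.2 - q.2) (q.1 - p.1) + p.2 p.1 : ℝ) : EReal)

open Classical in
def indic (T : Set (X × StrongDual ℝ X)) (p : X × StrongDual ℝ X) : EReal :=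
  if p ∈ T then 0 else ⊤

def IsRepFunOf (g : X × StrongDual ℝ X → EReal) (T : Set (X × StrongDual ℝ X)) : Prop :=
  IsGamma g ∧ (∀ p, (pairing p : EReal) ≤ g p) ∧ ∀ p, (g p = (pairing p : EReal) ↔ p ∈ T)

def IsReflexive (X : Type*) [NormedAddCommGroup X] [NormedSpace ℝ X] : Prop :=
  Function.Surjective (NormedSpace.inclusionInDoubleDual ℝ X)

def WeakTendstoProd (zs : ℕ → X × StrongDual ℝ X) (z : X × StrongDual ℝ X) : Prop :=
  (∀ g : StrongDual ℝ X, Tendsto (fun n => g (zs n).1) atTop (nhds (g z.1))) ∧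
  (∀ G : StrongDual ℝ (StrongDual ℝ X),
    Tendsto (fun n => G (zs n).2) atTop (nhds (G z.2)))

def MoscoConverges (fs : ℕ → X × StrongDual ℝ X → EReal)
    (f : X × StrongDual ℝ X → EReal) : Prop :=
  ∀ z : X × StrongDual ℝ X,
    (∃ zs : ℕ → X × StrongDual ℝ X, Tendsto zs atTop (nhds z) ∧
      Tendsto (fun n => fs n (zs n)) atTop (nhds (f z))) ∧
    (∀ zs : ℕ → X × StrongDual ℝ X, WeakTendstoProd zs z →
      f z ≤ Filter.liminf (fun n => fs n (zs n)) atTop)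

def Tset (h : X × StrongDual ℝ X → EReal) : Set (X × StrongDual ℝ X) :=
  {p | ((2 * pairing p : ℝ) : EReal) = h p + conjFn h (p.2, p.1)}

theorem continuous_pairing : Continuous (pairing (X := X)) :=
  isBoundedBilinearMap_apply.continuous.comp (continuous_snd.prodMk continuous_fst)

theorem EpiConverges.le_of_tendsto {E : Type*} [TopologicalSpace E] {fs : ℕ → E → EReal}
    {f : E → EReal} (hepi : EpiConverges fs f) {zs : ℕ → E} {z : E} {c : EReal}
    (hz : Tendsto zs atTop (𝓝 z)) (hc : Tendsto (fun n => fs n (zs n)) atTop (𝓝 c)) :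
    f z ≤ c :=
  hc.liminf_eq ▸ (hepi z).2 zs hz

theorem stmt8_general
    (fs : ℕ → X × StrongDual ℝ X → EReal)
    (f : X × StrongDual ℝ X → EReal)
    (hf_rep : ∀ p, (pairing p : EReal) ≤ f p)
    (hepi : EpiConverges fs f) :
    OpLiminf (fun n => Lset (fs n)) ⊆ Lset f := by
  rintro p ⟨zs, hmem, htend⟩
  have hvalues : Tendsto (fun n => fs n (zs n)) atTop (𝓝 (pairing p : EReal)) := by
    simp only [show ∀ n, fs n (zs n) = pairing (zs n) from hmem]
    exact (continuous_coe_real_ereal.tendsto _).comp ((continuous_pairing.tendsto p).comp htend)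
  exact le_antisymm (hepi.le_of_tendsto htend hvalues) (hf_rep p)

/-- If representative functions epi-converge to a representative function `f`,
then `liminf L(f_n) ⊆ L(f)`. -/
theorem stmt8 [CompleteSpace X]
    (fs : ℕ → X × StrongDual ℝ X → EReal)
    (hfs_gamma : ∀ n, IsGamma (fs n))
    (hfs_rep : ∀ n p, (pairing p : EReal) ≤ fs n p)
    (f : X × StrongDual ℝ X → EReal)
    (hf_gamma : IsGamma f)
    (hf_rep : ∀ p, (pairing p : EReal) ≤ f p)
    (hepi : EpiConverges fs f) :
    OpLiminf (fun n => Lset (fs n)) ⊆ Lset f :=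
  stmt8_general fs f hf_rep hepi
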